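/- Let κ ∈ {1, −1}. Let V be a complex vector space with a sesquilinear form B : V × V → ℂ (conjugate-linear in the first argument, linear in the second), and let u : V → V be a conjugate linear involution satisfying B(u x, u y) = κ · conj(B(x, y)) for all x, y. For ξ₁, …, ξ_n ∈ V define the function ψ[ξ₁, …, ξ_n] : Vⁿ → ℂ by ψ[ξ₁, …, ξ_n](η₁, …, η_n) := (1/n!) · Σ_{σ ∈ S_n} κ^{|σ|} · Π_{i=1}^{n} B(ξ_i, η_{σ(i)}), and for any function φ : Vⁿ → ℂ define (Uφ)(η₁, …, η_n) := conj(φ(u(η_n), …, u(η₁))). Then U(ψ[ξ₁, …, ξ_n]) = κⁿ • ψ[u(ξ_n), …, u(ξ₁)] as functions Vⁿ → ℂ, where κ^{|σ|} is the sign of σ if κ = −1 and 1 if κ = 1. -/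
import Mathlib


/-- `κ^{|σ|}`: the sign of the permutation `σ` if `κ = -1`, and `1` if `κ = 1`. -/
noncomputable def ksgn (κ : ℂ) {n : ℕ} (σ : Equiv.Perm (Fin n)) : ℂ :=
  if κ = -1 then ((Equiv.Perm.sign σ : ℤ) : ℂ) else 1

/-- The generating state `ψ[ξ₁, …, ξ_n]` of the (bosonic `κ = 1` / fermionic `κ = -1`)
Fock space over `V`:
`ψ[ξ₁, …, ξ_n](η₁, …, η_n) = (1/n!) Σ_{σ ∈ S_n} κ^{|σ|} Π_i B (ξ_i) (η_{σ(i)})`. -/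
noncomputable def genState (κ : ℂ) {V : Type*} [AddCommGroup V] [Module ℂ V]
    (B : V →ₛₗ[starRingEnd ℂ] V →ₗ[ℂ] ℂ) (n : ℕ) (ξ : Fin n → V) :
    (Fin n → V) → ℂ :=
  fun η => (n.factorial : ℂ)⁻¹ * ∑ σ : Equiv.Perm (Fin n), ksgn κ σ *
    ∏ i : Fin n, B (ξ i) (η (σ i))

/-- The conjugation `U` induced on Fock space by a conjugate linear
involution `u` with `B (u x) (u y) = κ conj (B x y)` acts on generating states by
`U ψ[ξ₁, …, ξ_n] = κⁿ ψ[u ξ_n, …, u ξ₁]`, where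
`(U φ)(η₁, …, η_n) = conj (φ (u η_n, …, u η₁))`. -/
theorem stmt_13 {V : Type*} [AddCommGroup V] [Module ℂ V]
    (κ : ℂ) (hκ : κ = 1 ∨ κ = -1)
    (B : V →ₛₗ[starRingEnd ℂ] V →ₗ[ℂ] ℂ)
    (u : V →ₛₗ[starRingEnd ℂ] V) (hu2 : ∀ x, u (u x) = x)
    (huB : ∀ x y, B (u x) (u y) = κ * starRingEnd ℂ (B x y))
    (n : ℕ) (ξ : Fin n → V) :
    (fun η : Fin n → V =>
        starRingEnd ℂ (genState κ B n ξ (fun i => u (η i.rev)))) =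
      (fun η : Fin n → V => κ ^ n * genState κ B n (fun i => u (ξ i.rev)) η) := by
  have hκ2 : κ * κ = 1 := by rcases hκ with h | h <;> simp [h]
  funext η
  have hconjB : ∀ (x y : V), starRingEnd ℂ (B x (u y)) = κ * B (u x) y := by
    intro x y
    have h := huB x (u y)
    rw [hu2] at h
    rw [h, ← mul_assoc, hκ2, one_mul]
  have hksgn : ∀ σ : Equiv.Perm (Fin n), starRingEnd ℂ (ksgn κ σ) = ksgn κ σ := by
    intro σ; unfold ksgn; split <;> simp
  simp only [genState, map_mul, map_sum, map_inv₀, map_natCast, map_prod]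
  rw [mul_comm (κ ^ n), mul_assoc]
  congr 1
  rw [Finset.sum_mul]
  refine Fintype.sum_equiv ((Equiv.mulLeft Fin.revPerm).trans (Equiv.mulRight Fin.revPerm))
    _ _ ?_
  intro σ
  simp only [Equiv.trans_apply, Equiv.coe_mulLeft, Equiv.coe_mulRight]
  have hsgn : ksgn κ σ = ksgn κ (Fin.revPerm * σ * Fin.revPerm) := by
    have hs : Equiv.Perm.sign (Fin.revPerm * σ * Fin.revPerm : Equiv.Perm (Fin n)) =
        Equiv.Perm.sign σ := by
      rw [map_mul, map_mul, mul_comm (Equiv.Perm.sign (Fin.revPerm : Equiv.Perm (Fin n))),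
        mul_assoc, Int.units_mul_self, mul_one]
    unfold ksgn; rw [hs]
  have hprod : ∏ i : Fin n, starRingEnd ℂ (B (ξ i) (u (η (σ i).rev))) =
      κ ^ n * ∏ i : Fin n, B (u (ξ i.rev))
        (η ((Fin.revPerm * σ * Fin.revPerm : Equiv.Perm (Fin n)) i)) := by
    have h1 : ∀ i : Fin n, starRingEnd ℂ (B (ξ i) (u (η (σ i).rev))) =
        κ * B (u (ξ i)) (η (σ i).rev) := fun i => hconjB _ _
    rw [Finset.prod_congr rfl (fun i _ => h1 i), Finset.prod_mul_distrib,
      Finset.prod_const, Finset.card_univ, Fintype.card_fin]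
    congr 1
    rw [← Equiv.prod_comp Fin.revPerm (fun i => B (u (ξ i)) (η (σ i).rev))]
    simp [Fin.rev_rev, Equiv.Perm.mul_apply]
  rw [hksgn, hprod, hsgn]
  ring
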